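/- With I satisfying Condition (C), J m-primary with J² = bJ, J = (b) :_R J, I ⊊ J, and B = J : J, the quotient A/B is isomorphic to (B/𝔞)^⊕t as a B-module, where 𝔞 = b⁻¹I. -/

import Mathlib

set_option synthInstance.maxHeartbeats 1000000
set_option maxHeartbeats 2000000
set_option linter.unnecessarySimpa false

open IsLocalRing Pointwise

section Defs
variable (R : Type*) [CommRing R]

/-- minimal number of generators of a submodule -/
noncomputable def mu {M : Type*} [AddCommGroup M] [Module R M] (N : Submodule R M) : ℕ :=
  sInf {n | ∃ s : Finset M, s.card = n ∧ Submodule.span R (↑s : Set M) = N}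

/-- length of a module, as the Krull dimension of its lattice of submodules -/
noncomputable def rlength (M : Type*) [AddCommGroup M] [Module R M] : WithBot ℕ∞ :=
  Order.krullDim (Submodule R M)

variable (K : Type*) [CommRing K] [Algebra R K]

/-- the image of an ideal in the total ring of fractions `K` -/
noncomputable def toK (I : Ideal R) : Submodule R K :=
  Submodule.map (Algebra.linearMap R K) I

/-- colon of submodules of the total quotient ring: `X : Y = {z | zY ⊆ X}` -/
def qcolon (X Y : Submodule R K) : Submodule R K where
  carrier := {z | ∀ y ∈ Y, z * y ∈ X}
  add_mem' := by
    intro a b ha hb y hy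
    simpa [add_mul] using X.add_mem (ha y hy) (hb y hy)
  zero_mem' := by
    intro y hy; simpa using X.zero_mem
  smul_mem' := by
    intro c a ha y hy
    simpa [smul_mul_assoc] using X.smul_mem c (ha y hy)

/-- `I : I`, viewed as a subalgebra (a birational extension of `R`) of the total
ring of fractions `K`. -/
noncomputable def endAlg (I : Ideal R) : Subalgebra R K where
  carrier := {z | ∀ y ∈ toK R K I, z * y ∈ toK R K I}
  mul_mem' := by
    intro a b ha hb y hy
    rw [mul_assoc]; exact ha _ (hb y hy)
  add_mem' := by
    intro a b ha hb y hy
    simpa [add_mul] using (toK R K I).add_mem (ha y hy) (hb y hy)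
  one_mem' := by intro y hy; simpa using hy
  zero_mem' := by intro y hy; simpa using (toK R K I).zero_mem
  algebraMap_mem' := by
    intro r y hy
    simpa [Algebra.smul_def] using (toK R K I).smul_mem r hy

/-- the socle `{x | m x = 0}` of a module over a local ring (`(⊥).jacobson` is
the maximal ideal of a local ring) -/
def socle (M : Type*) [AddCommGroup M] [Module R M] : Submodule R M where
  carrier := {x | ∀ c ∈ (⊥ : Ideal R).jacobson, c • x = 0}
  add_mem' := by
    intro a b ha hb c hc; rw [smul_add, ha c hc, hb c hc, add_zero]
  zero_mem' := by intro c hc; simp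
  smul_mem' := by
    intro r x hx c hc; rw [smul_comm, hx c hc, smul_zero]

/-- `R` has multiplicity `e`: the Hilbert function of the maximal ideal has
eventual first difference `e`.  (This is the multiplicity of a one-dimensional
Cohen-Macaulay local ring.) -/
noncomputable def HasMult (e : ℕ) : Prop :=
  ∀ᶠ n in Filter.atTop,
    rlength R (R ⧸ ((⊥ : Ideal R).jacobson ^ (n + 1))) =
      rlength R (R ⧸ ((⊥ : Ideal R).jacobson ^ n)) + (e : WithBot ℕ∞)

/-- `R` has Cohen-Macaulay type `r`: for every parameter (a nonzerodivisor in
the maximal ideal), the socle of `R/(a)` has length `r`. -/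
noncomputable def HasCMType (r : ℕ) : Prop :=
  ∀ a : R, a ∈ (⊥ : Ideal R).jacobson → a ∈ nonZeroDivisors R →
    rlength (R ⧸ Ideal.span {a}) (socle (R ⧸ Ideal.span {a}) (R ⧸ Ideal.span {a}))
      = (r : WithBot ℕ∞)

/-- an Artinian local ring is Gorenstein iff its socle is simple -/
noncomputable def IsArtinianGorensteinLocal : Prop :=
  IsArtinianRing R ∧ IsLocalRing R ∧ rlength R (socle R R) = (1 : WithBot ℕ∞)

/-- a one-dimensional Cohen-Macaulay (Noetherian) local ring: local Noetherian
of Krull dimension one with positive depth -/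
class IsOneDimCMLocal : Prop where
  noeth : IsNoetherianRing R
  local_ : IsLocalRing R
  dim_one : ringKrullDim R = 1
  depth_pos : ∃ a : R, a ∈ (⊥ : Ideal R).jacobson ∧ a ∈ nonZeroDivisors R

/-- Ulrich ideal: an `m`-primary ideal with a principal reduction `Q ⊊ I`,
`I² = QI`, and `I/I²` free over `R/I`. -/
def IsUlrich (I : Ideal R) : Prop :=
  I.radical = (⊥ : Ideal R).jacobson ∧ I ≠ ⊤ ∧
  ∃ a ∈ I, Ideal.span {a} ≠ I ∧ I ^ 2 = Ideal.span {a} * I ∧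
    Module.Free (R ⧸ I) I.Cotangent

/-- Condition (C) for an `m`-primary ideal `I`, with the number `t`:
`A/R ≅ (R/I)^t` with `t > 0` and `A = R : I`, where `A = I : I`. -/
def ConditionC (I : Ideal R) (t : ℕ) : Prop :=
  I.radical = (⊥ : Ideal R).jacobson ∧ I ≠ ⊤ ∧ 0 < t ∧
  Nonempty (((qcolon R K (toK R K I) (toK R K I)) ⧸
      (Submodule.comap (qcolon R K (toK R K I) (toK R K I)).subtype (toK R K (⊤ : Ideal R))))
    ≃ₗ[R] (Fin t → R ⧸ I)) ∧
  qcolon R K (toK R K I) (toK R K I) = qcolon R K (toK R K (⊤ : Ideal R)) (toK R K I)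

end Defs

/-!
Lift the generators of `A/R ≅ (R/I)^t` to `f₁, …, f_t ∈ A` and send `s ∈ B^t` to `∑ sᵢ fᵢ` in
`A/B`. This is onto because `A = R + ∑ R fᵢ` and `R ⊆ B`. Its kernel is `𝔞^t`: if `∑ sᵢ fᵢ ∈ B`,
multiplying by `b` gives `∑ (b sᵢ) fᵢ ∈ J ⊆ R` with coefficients `b sᵢ ∈ J ⊆ R`, so every
`b sᵢ ∈ I`; conversely `𝔞 A ⊆ 𝔞 ⊆ B`, the last inclusion because `I J ⊆ J² = bJ`. Here `b` is
invertible in `K`, since `J² = bJ` and `J` contains a nonzerodivisor.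
-/

theorem mem_nonZeroDivisors_of_sq_eq_span_mul {R : Type*} [CommRing R] {J : Ideal R} {a b : R}
    (ha : a ∈ nonZeroDivisors R) (haJ : a ∈ J) (hred : J ^ 2 = Ideal.span {b} * J) :
    b ∈ nonZeroDivisors R := by
  have : a * a ∈ Ideal.span {b} * J := hred ▸ pow_two J ▸ Ideal.mul_mem_mul haJ haJ
  obtain ⟨d, -, hd⟩ := Ideal.mem_span_singleton_mul.1 this
  have had : a * a ∈ nonZeroDivisors R := mul_mem ha ha
  rw [← hd] at had
  exact (mul_mem_nonZeroDivisors.1 had).1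

theorem IsOneDimCMLocal.exists_mem_nonZeroDivisors {R : Type*} [CommRing R] [IsOneDimCMLocal R]
    {J : Ideal R} (hJ : J.radical = (⊥ : Ideal R).jacobson) : ∃ a ∈ J, a ∈ nonZeroDivisors R := by
  obtain ⟨a, ham, ha⟩ := IsOneDimCMLocal.depth_pos (R := R)
  obtain ⟨n, hn⟩ := Ideal.mem_radical_iff.1 (hJ ▸ ham : a ∈ J.radical)
  exact ⟨a ^ n, hn, pow_mem ha n⟩

namespace Submodule

variable {S M P ι : Type*} [CommRing S] [AddCommGroup M] [Module S M] [Fintype ι] [DecidableEq ι]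

theorem exists_lift_of_quotient_equiv_pi {A N : Submodule S M} {I : Ideal S}
    (φ : (A ⧸ N.comap A.subtype) ≃ₗ[S] (ι → S ⧸ I)) :
    ∃ f : ι → M, (∀ i, f i ∈ A) ∧ (∀ r : ι → S, ∑ i, r i • f i ∈ N → ∀ i, r i ∈ I) ∧
      ∀ z ∈ A, ∃ r : ι → S, z - ∑ i, r i • f i ∈ N := by
  choose F hF using fun i => (N.comap A.subtype).mkQ_surjective (φ.symm (Pi.single i 1))
  have hmk : ∀ r : ι → S,
      (N.comap A.subtype).mkQ (∑ i, r i • F i) = φ.symm fun i => Ideal.Quotient.mk I (r i) := by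
    intro r
    rw [map_sum]
    simp_rw [map_smul, hF, ← map_smul, ← map_sum]
    congr 1
    ext j
    simp [Finset.sum_apply, Pi.single_apply, Algebra.smul_def]
  refine ⟨fun i => F i, fun i => (F i).2, fun r hr i => ?_, fun z hz => ?_⟩
  · have h0 : (N.comap A.subtype).mkQ (∑ i, r i • F i) = 0 := by
      rw [mkQ_apply, Quotient.mk_eq_zero, mem_comap, subtype_apply, coe_sum]
      simpa using hr
    rw [hmk, LinearEquiv.map_eq_zero_iff] at h0
    exact Ideal.Quotient.eq_zero_iff_mem.1 (congrFun h0 i)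
  · choose r hr using fun i =>
      Ideal.Quotient.mk_surjective (φ ((N.comap A.subtype).mkQ ⟨z, hz⟩) i)
    have h0 : (N.comap A.subtype).mkQ (⟨z, hz⟩ - ∑ i, r i • F i) = 0 := by
      rw [map_sub, hmk, funext hr, LinearEquiv.symm_apply_apply, sub_self]
    rw [mkQ_apply, Quotient.mk_eq_zero, mem_comap, subtype_apply, AddSubgroupClass.coe_sub,
      coe_sum] at h0
    exact ⟨r, by simpa using h0⟩

variable [AddCommGroup P] [Module S P]

theorem nonempty_quotient_equiv_pi_of_sub_mem (N : Submodule S M) (Q : Submodule S P)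
    (g : (ι → P) →ₗ[S] M) (hsurj : ∀ m, ∃ x, m - g x ∈ N) (hker : ∀ x, g x ∈ N ↔ ∀ i, x i ∈ Q) :
    Nonempty ((M ⧸ N) ≃ₗ[S] (ι → P ⧸ Q)) := by
  have hs : Function.Surjective (N.mkQ ∘ₗ g) := by
    rintro ⟨m⟩
    obtain ⟨x, hx⟩ := hsurj m
    exact ⟨x, (Quotient.eq N).2 (sub_mem_comm_iff.1 hx)⟩
  have hk : LinearMap.ker (N.mkQ ∘ₗ g) = pi Set.univ fun _ => Q := by
    ext x
    simp [hker]
  exact ⟨(LinearMap.quotKerEquivOfSurjective _ hs).symm ≪≫ₗ quotEquivOfEq _ _ hk ≪≫ₗ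
    quotientPi fun _ => Q⟩

end Submodule

theorem nonempty_quotient_equiv_pi_of_sum_mul {S K ι : Type*} [CommRing S] [CommRing K]
    [Algebra S K] [Fintype ι] [DecidableEq ι] {A B 𝔞 : Submodule S K} (f : ι → K)
    (hf : ∀ i, ∀ s ∈ B, s * f i ∈ A)
    (hsurj : ∀ z ∈ A, ∃ s : ι → K, (∀ i, s i ∈ B) ∧ z - ∑ i, s i * f i ∈ B)
    (hker : ∀ s : ι → K, (∀ i, s i ∈ B) → (∑ i, s i * f i ∈ B ↔ ∀ i, s i ∈ 𝔞)) :
    Nonempty ((A ⧸ B.comap A.subtype) ≃ₗ[S] (ι → B ⧸ 𝔞.comap B.subtype)) := by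
  let g : (ι → B) →ₗ[S] A :=
    ∑ i, ((LinearMap.mulRight S (f i)).restrict (hf i)).comp (LinearMap.proj i)
  have hg : ∀ x, (g x : K) = ∑ i, x i * f i := by
    intro x
    simp only [g, LinearMap.coe_sum, Finset.sum_apply, LinearMap.comp_apply, LinearMap.proj_apply,
      Submodule.coe_sum]
    rfl
  refine Submodule.nonempty_quotient_equiv_pi_of_sub_mem _ _ g (fun z => ?_) (fun x => ?_)
  · obtain ⟨s, hs, hz⟩ := hsurj z z.2
    exact ⟨fun i => ⟨s i, hs i⟩, by simpa [hg] using hz⟩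
  · simpa [hg] using hker (fun i => x i) fun i => (x i).2

section Colon

variable {R : Type*} [CommRing R] {K : Type*} [CommRing K] [Algebra R K]

theorem mem_toK {L : Ideal R} {z : K} : z ∈ toK R K L ↔ ∃ x ∈ L, algebraMap R K x = z :=
  Submodule.mem_map

theorem algebraMap_mem_toK {L : Ideal R} {x : R} (hx : x ∈ L) :
    algebraMap R K x ∈ toK R K L :=
  mem_toK.2 ⟨x, hx, rfl⟩

theorem mul_mem_qcolon {X Y : Submodule R K} {w z : K} (hw : w ∈ qcolon R K X X)
    (hz : z ∈ qcolon R K X Y) : w * z ∈ qcolon R K X Y := fun y hy => by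
  rw [mul_assoc]
  exact hw _ (hz y hy)

theorem mem_qcolon_span_singleton {I : Ideal R} {b : R} {z : K} :
    z ∈ qcolon R K (toK R K I) (toK R K (Ideal.span {b})) ↔ z * algebraMap R K b ∈ toK R K I := by
  refine ⟨fun h => h _ (algebraMap_mem_toK (Ideal.mem_span_singleton_self b)), fun h y hy => ?_⟩
  obtain ⟨x, hx, rfl⟩ := mem_toK.1 hy
  obtain ⟨r, rfl⟩ := Ideal.mem_span_singleton'.1 hx
  rw [map_mul, mul_left_comm, ← Algebra.smul_def]
  exact (toK R K I).smul_mem r h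

theorem mem_endAlg_of_mem_toK_top {J : Ideal R} {z : K} (hz : z ∈ toK R K ⊤) :
    z ∈ endAlg R K J := by
  obtain ⟨r, -, rfl⟩ := mem_toK.1 hz
  exact (endAlg R K J).algebraMap_mem r

theorem mem_qcolon_top_of_mem_endAlg {I J : Ideal R} (hIJ : I ≤ J) {s : K}
    (hs : s ∈ endAlg R K J) : s ∈ qcolon R K (toK R K ⊤) (toK R K I) := fun y hy =>
  Submodule.map_mono le_top (hs y (Submodule.map_mono hIJ hy))

theorem mem_endAlg_of_mem_qcolon_span_singleton {I J : Ideal R} {b : R}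
    (hb : IsUnit (algebraMap R K b)) (hIJ : I * J ≤ Ideal.span {b} * J) {z : K}
    (hz : z ∈ qcolon R K (toK R K I) (toK R K (Ideal.span {b}))) : z ∈ endAlg R K J := by
  obtain ⟨x, hx, hxz⟩ := mem_toK.1 (mem_qcolon_span_singleton.1 hz)
  intro y hy
  obtain ⟨j, hj, rfl⟩ := mem_toK.1 hy
  obtain ⟨j', hj', hxj⟩ := Ideal.mem_span_singleton_mul.1 (hIJ (Ideal.mul_mem_mul hx hj))
  have : algebraMap R K b * (z * algebraMap R K j) = algebraMap R K b * algebraMap R K j' := by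
    rw [← map_mul, hxj, map_mul, hxz]
    ring
  rw [hb.mul_left_cancel this]
  exact algebraMap_mem_toK hj'


def Submodule.ofMulMem (M : Submodule R K) (S : Subalgebra R K)
    (h : ∀ s ∈ S, ∀ z ∈ M, s * z ∈ M) : Submodule S K where
  toAddSubmonoid := M.toAddSubmonoid
  smul_mem' c z hz := h c c.2 z hz

theorem sum_mul_mem_endAlg_iff {ι : Type*} [Fintype ι] {I J : Ideal R} {b : R}
    (hbK : IsUnit (algebraMap R K b)) (hb : b ∈ J) (hIJ : I * J ≤ Ideal.span {b} * J)
    {f : ι → K} (hfA : ∀ i, f i ∈ qcolon R K (toK R K I) (toK R K I))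
    (hfI : ∀ r : ι → R, ∑ i, r i • f i ∈ toK R K ⊤ → ∀ i, r i ∈ I)
    {s : ι → K} (hs : ∀ i, s i ∈ endAlg R K J) :
    ∑ i, s i * f i ∈ endAlg R K J ↔
      ∀ i, s i ∈ qcolon R K (toK R K I) (toK R K (Ideal.span {b})) := by
  refine ⟨fun hsum => ?_, fun h𝔞 => Subalgebra.sum_mem _ fun i _ => ?_⟩
  · choose j _ hjs using fun i => mem_toK.1 (hs i _ (algebraMap_mem_toK hb))
    have hjf : ∑ i, j i • f i = (∑ i, s i * f i) * algebraMap R K b := by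
      simp_rw [Finset.sum_mul, Algebra.smul_def, hjs, mul_right_comm]
    have hjR : ∑ i, j i • f i ∈ toK R K ⊤ :=
      hjf ▸ Submodule.map_mono le_top (hsum _ (algebraMap_mem_toK hb))
    exact fun i => mem_qcolon_span_singleton.2 (hjs i ▸ algebraMap_mem_toK (hfI j hjR i))
  · rw [mul_comm]
    exact mem_endAlg_of_mem_qcolon_span_singleton hbK hIJ (mul_mem_qcolon (hfA i) (h𝔞 i))

end Colon

theorem stmt4_general (R : Type*) [CommRing R] [IsOneDimCMLocal R]
    (K : Type*) [CommRing K] [Algebra R K] [IsFractionRing R K]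
    (I : Ideal R) (t : ℕ) (hC : ConditionC R K I t)
    (J : Ideal R) (hJm : J.radical = (⊥ : Ideal R).jacobson)
    (b : R) (hb : b ∈ J) (hred : J ^ 2 = Ideal.span {b} * J)
    (hIJ : I < J) :
    ∃ A' B' a' : Submodule (endAlg R K J) (K),
      (A' : Set (K)) = (qcolon R K (toK R K I) (toK R K I) : Set (K)) ∧
      (B' : Set (K)) = (endAlg R K J : Set (K)) ∧
      (a' : Set (K)) =
        (qcolon R K (toK R K I) (toK R K (Ideal.span {b})) : Set (K)) ∧
      Nonempty ((A' ⧸ Submodule.comap A'.subtype B') ≃ₗ[endAlg R K J]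
        (Fin t → (B' ⧸ Submodule.comap B'.subtype a'))) := by
  obtain ⟨-, -, -, ⟨φ⟩, hA⟩ := hC
  obtain ⟨a, haJ, ha⟩ := IsOneDimCMLocal.exists_mem_nonZeroDivisors hJm
  have hbK : IsUnit (algebraMap R K b) := IsLocalization.map_units K
    (⟨b, mem_nonZeroDivisors_of_sq_eq_span_mul ha haJ hred⟩ : nonZeroDivisors R)
  have hIJb : I * J ≤ Ideal.span {b} * J := hred ▸ pow_two J ▸ Ideal.mul_mono_left hIJ.le
  have hBA : ∀ s ∈ endAlg R K J, s ∈ qcolon R K (toK R K I) (toK R K I) :=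
    fun s hs => hA ▸ mem_qcolon_top_of_mem_endAlg hIJ.le hs
  obtain ⟨f, hfA, hfI, hfR⟩ := Submodule.exists_lift_of_quotient_equiv_pi φ
  refine ⟨(qcolon R K (toK R K I) (toK R K I)).ofMulMem (endAlg R K J)
      fun s hs z hz => mul_mem_qcolon (hBA s hs) hz,
    (Subalgebra.toSubmodule (endAlg R K J)).ofMulMem (endAlg R K J)
      fun s hs z hz => (endAlg R K J).mul_mem hs hz,
    (qcolon R K (toK R K I) (toK R K (Ideal.span {b}))).ofMulMem (endAlg R K J)
      fun s hs z hz => mul_mem_qcolon (hBA s hs) hz,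
    rfl, rfl, rfl, nonempty_quotient_equiv_pi_of_sum_mul f
      (fun i s hs => mul_mem_qcolon (hBA s hs) (hfA i)) (fun z hz => ?_)
      (fun s hs => sum_mul_mem_endAlg_iff hbK hb hIJb hfA hfI hs)⟩
  obtain ⟨r, hr⟩ := hfR z hz
  refine ⟨fun i => algebraMap R K (r i), fun i => (endAlg R K J).algebraMap_mem _, ?_⟩
  simp_rw [Algebra.smul_def] at hr
  exact mem_endAlg_of_mem_toK_top hr

theorem stmt4 (R : Type*) [CommRing R] [IsOneDimCMLocal R]
    (K : Type*) [CommRing K] [Algebra R K] [IsFractionRing R K]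
    (I : Ideal R) (t : ℕ) (hC : ConditionC R K I t)
    (J : Ideal R) (hJm : J.radical = (⊥ : Ideal R).jacobson) (hJtop : J ≠ ⊤)
    (b : R) (hb : b ∈ J) (hred : J ^ 2 = Ideal.span {b} * J)
    (hcol : J = Submodule.colon (Ideal.span {b} : Ideal R) J)
    (hIJ : I < J) :
    ∃ A' B' a' : Submodule (endAlg R K J) (K),
      (A' : Set (K)) = (qcolon R K (toK R K I) (toK R K I) : Set (K)) ∧
      (B' : Set (K)) = (endAlg R K J : Set (K)) ∧
      (a' : Set (K)) =
        (qcolon R K (toK R K I) (toK R K (Ideal.span {b})) : Set (K)) ∧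
      Nonempty ((A' ⧸ Submodule.comap A'.subtype B') ≃ₗ[endAlg R K J]
        (Fin t → (B' ⧸ Submodule.comap B'.subtype a'))) :=
  stmt4_general R K I t hC J hJm b hb hred hIJ
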